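/- If an atomic formula R(u,u'), with R ∈ {<, =, succ} and u,u' among {min, max, x, y, z}, distinguishes a pair of families ⟨C,D⟩ of interpretations over linear orders (every interpretation in C satisfies it, every interpretation in D falsifies it), then there exists a separator for ⟨C,D⟩ of weight at most 1; in particular every minimal separator for ⟨C,D⟩ has weight at most 1. -/
import Mathlib


/-- Terms over the linear-order signature `{min, max, <, succ}`. -/
inductive LTerm : Type
  | min : LTerm
  | max : LTerm
  | var : ℕ → LTerm

/-- Formulas of counting logic over the signature `{min, max, <, succ}`:
first-order logic extended with the counting quantifiers `∃^{≥k} x_j` and `∀^{≥k} x_j`. -/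
inductive CFormula : Type
  | eq : LTerm → LTerm → CFormula
  | lt : LTerm → LTerm → CFormula
  | succ : LTerm → LTerm → CFormula
  | not : CFormula → CFormula
  | or : CFormula → CFormula → CFormula
  | and : CFormula → CFormula → CFormula
  | exCnt : ℕ → ℕ → CFormula → CFormula    -- `exCnt k j ψ` is `∃^{≥k} x_j ψ`
  | allCnt : ℕ → ℕ → CFormula → CFormula   -- `allCnt k j ψ` is `∀^{≥k} x_j ψ = ¬∃^{≥k} x_j ¬ψ`

/-- All variables occurring in a term have index `< m`. -/
def LTerm.varsLT (m : ℕ) : LTerm → Prop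
  | .var j => j < m
  | _ => True

namespace CFormula

/-- Formula size. -/
def size : CFormula → ℕ
  | eq _ _ => 1
  | lt _ _ => 1
  | succ _ _ => 1
  | not ψ => ψ.size + 1
  | or ψ θ => ψ.size + θ.size
  | and ψ θ => ψ.size + θ.size
  | exCnt _ _ ψ => ψ.size + 1
  | allCnt _ _ ψ => ψ.size + 1

/-- Counting rank: the maximum counting rank of the quantifiers of the formula. -/
def crank : CFormula → ℕ
  | eq _ _ => 0
  | lt _ _ => 0
  | succ _ _ => 0
  | not ψ => ψ.crank
  | or ψ θ => max ψ.crank θ.crank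
  | and ψ θ => max ψ.crank θ.crank
  | exCnt k _ ψ => max k ψ.crank
  | allCnt k _ ψ => max k ψ.crank

/-- Quantifier rank: maximal nesting depth of quantifiers. -/
def qrank : CFormula → ℕ
  | eq _ _ => 0
  | lt _ _ => 0
  | succ _ _ => 0
  | not ψ => ψ.qrank
  | or ψ θ => max ψ.qrank θ.qrank
  | and ψ θ => max ψ.qrank θ.qrank
  | exCnt _ _ ψ => ψ.qrank + 1
  | allCnt _ _ ψ => ψ.qrank + 1

/-- The formula uses only the variables `x_0, …, x_{m-1}`. -/
def varsLT (m : ℕ) : CFormula → Prop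
  | eq t t' => t.varsLT m ∧ t'.varsLT m
  | lt t t' => t.varsLT m ∧ t'.varsLT m
  | succ t t' => t.varsLT m ∧ t'.varsLT m
  | not ψ => ψ.varsLT m
  | or ψ θ => ψ.varsLT m ∧ θ.varsLT m
  | and ψ θ => ψ.varsLT m ∧ θ.varsLT m
  | exCnt _ j ψ => j < m ∧ ψ.varsLT m
  | allCnt _ j ψ => j < m ∧ ψ.varsLT m

/-- Atomic formulas. -/
def IsAtomic : CFormula → Prop
  | eq _ _ => True
  | lt _ _ => True
  | succ _ _ => True
  | _ => False

end CFormula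

/-- A relational structure over the signature `{min, max, <, succ}`. -/
structure LOStruct : Type 1 where
  carrier : Type
  lt : carrier → carrier → Prop
  succ : carrier → carrier → Prop
  bot : carrier
  top : carrier

/-- Value of a term in a structure under a variable assignment. -/
def LTerm.val (S : LOStruct) (α : ℕ → S.carrier) : LTerm → S.carrier
  | .min => S.bot
  | .max => S.top
  | .var j => α j

/-- Satisfaction of a counting-logic formula in a structure under an assignment.
`∃^{≥k} x_j ψ` holds iff at least `k` distinct values for `x_j` satisfy `ψ`. -/
def Sat (S : LOStruct) : (ℕ → S.carrier) → CFormula → Prop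
  | α, .eq t t' => t.val S α = t'.val S α
  | α, .lt t t' => S.lt (t.val S α) (t'.val S α)
  | α, .succ t t' => S.succ (t.val S α) (t'.val S α)
  | α, .not ψ => ¬ Sat S α ψ
  | α, .or ψ θ => Sat S α ψ ∨ Sat S α θ
  | α, .and ψ θ => Sat S α ψ ∧ Sat S α θ
  | α, .exCnt k j ψ =>
      ∃ f : Fin k → S.carrier, Function.Injective f ∧
        ∀ i, Sat S (Function.update α j (f i)) ψ
  | α, .allCnt k j ψ =>
      ¬ ∃ f : Fin k → S.carrier, Function.Injective f ∧
        ∀ i, ¬ Sat S (Function.update α j (f i)) ψ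

/-- The linear order `A_n = ({0,…,n}, <)` with `min = 0`, `max = n` and the successor relation. -/
def AStruct (n : ℕ) : LOStruct where
  carrier := Fin (n + 1)
  lt := fun a b => a < b
  succ := fun a b => (a : ℕ) + 1 = (b : ℕ)
  bot := 0
  top := Fin.last n

/-- The five "positions" `{min, max, x, y, z}` used by separators. -/
inductive SVar : Type
  | vmin | vmax | vx | vy | vz
deriving DecidableEq

/-- An interpretation `(𝒜, α)`: a linear order `A_n` (on the integers `{0, …, n}`) together
with an assignment of the three variables `x, y, z`. -/
structure Interp : Type where
  n : ℕ
  a : Fin 3 → Fin (n + 1)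

/-- The integer value of each of `min, max, x, y, z` under an interpretation. -/
def Interp.val (I : Interp) : SVar → ℤ
  | .vmin => 0
  | .vmax => I.n
  | .vx => I.a 0
  | .vy => I.a 1
  | .vz => I.a 2

/-- The distance `d(a, b) = |a − b|` between the values of two positions. -/
def Interp.dist (I : Interp) (u u' : SVar) : ℕ := (I.val u - I.val u').natAbs

/-- `δ` separates the pair of interpretations `⟨I, J⟩`: there are distinct
`u, u' ∈ {min, max, x, y, z}` such that either the `<`-types differ, or both
`MIN[d_I(u,u'), d_J(u,u')] ≤ δ({u,u'})` and `d_I(u,u') ≠ d_J(u,u')`. -/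
def Separates (δ : Finset SVar → ℕ) (I J : Interp) : Prop :=
  ∃ u u' : SVar, u ≠ u' ∧
    (compare (I.val u) (I.val u') ≠ compare (J.val u) (J.val u') ∨
      (min (I.dist u u') (J.dist u u') ≤ δ {u, u'} ∧ I.dist u u' ≠ J.dist u u'))

/-- `δ : P₂({min,max,x,y,z}) → ℕ` is a separator for `⟨A, B⟩`. -/
def IsSeparator (δ : Finset SVar → ℕ) (A B : Set Interp) : Prop :=
  ∀ I ∈ A, ∀ J ∈ B, Separates δ I J

/-- The border-distance
`b(δ) = MAX {δ({min,max}), δ({min,u}) + δ({u',max}) : u, u' ∈ {x,y,z}}`. -/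
def borderDist (δ : Finset SVar → ℕ) : ℕ :=
  max (δ {SVar.vmin, SVar.vmax})
    ((({SVar.vx, SVar.vy, SVar.vz} : Finset SVar) ×ˢ
        ({SVar.vx, SVar.vy, SVar.vz} : Finset SVar)).sup
      fun p => δ {SVar.vmin, p.1} + δ {p.2, SVar.vmax})

/-- The centre-distance `c(δ) = MAX {δ(p) + δ(q) : p ≠ q ∈ P₂({x,y,z})}`. -/
def centreDist (δ : Finset SVar → ℕ) : ℕ :=
  max (δ {SVar.vx, SVar.vy} + δ {SVar.vx, SVar.vz})
    (max (δ {SVar.vx, SVar.vy} + δ {SVar.vy, SVar.vz})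
      (δ {SVar.vx, SVar.vz} + δ {SVar.vy, SVar.vz}))

/-- The weight `w(δ) = √(c(δ)² + b(δ))`. -/
noncomputable def sepWeight (δ : Finset SVar → ℕ) : ℝ :=
  Real.sqrt ((centreDist δ : ℝ) ^ 2 + (borderDist δ : ℝ))

/-- A minimal separator for `⟨A, B⟩`: a separator of minimal weight. -/
def IsMinimalSeparator (δ : Finset SVar → ℕ) (A B : Set Interp) : Prop :=
  IsSeparator δ A B ∧ ∀ δ' : Finset SVar → ℕ, IsSeparator δ' A B → sepWeight δ ≤ sepWeight δ'

/-- The total assignment attached to an interpretation: `x_0 = x`, `x_1 = y`, `x_2 = z`. -/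
def Interp.asgn (I : Interp) : ℕ → Fin (I.n + 1) :=
  fun j => if h : j < 3 then I.a ⟨j, h⟩ else 0

/-- The interpretation `I = (A_n, α)` satisfies the counting-logic formula `φ`. -/
def SatI (I : Interp) (φ : CFormula) : Prop := Sat (AStruct I.n) I.asgn φ

/-- Map a term (with variables among `x_0,x_1,x_2`) to its position in `{min,max,x,y,z}`. -/
def toSVar : LTerm → SVar
  | .min => .vmin
  | .max => .vmax
  | .var 0 => .vx
  | .var 1 => .vy
  | .var _ => .vz

/-- The value of a term in `A_{I.n}` under the assignment of `I`, as an element of `Fin (I.n+1)`. -/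
def tval (I : Interp) (t : LTerm) : Fin (I.n + 1) := t.val (AStruct I.n) I.asgn

lemma val_toSVar (I : Interp) (t : LTerm) (h : t.varsLT 3) :
    ((tval I t : ℕ) : ℤ) = I.val (toSVar t) := by
  cases t with
  | min => simp [tval, LTerm.val, AStruct, toSVar, Interp.val]
  | max => simp [tval, LTerm.val, AStruct, toSVar, Interp.val]
  | var j =>
    have hj : j < 3 := h
    interval_cases j <;>
      simp [tval, LTerm.val, toSVar, Interp.val, Interp.asgn]

lemma satI_eq_iff (I : Interp) (t t' : LTerm) (ht : t.varsLT 3) (ht' : t'.varsLT 3) :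
    SatI I (.eq t t') ↔ I.val (toSVar t) = I.val (toSVar t') := by
  rw [← val_toSVar I t ht, ← val_toSVar I t' ht']
  show (tval I t = tval I t') ↔ _
  exact (Int.natCast_inj.trans Fin.val_inj).symm

lemma satI_lt_iff (I : Interp) (t t' : LTerm) (ht : t.varsLT 3) (ht' : t'.varsLT 3) :
    SatI I (.lt t t') ↔ I.val (toSVar t) < I.val (toSVar t') := by
  rw [← val_toSVar I t ht, ← val_toSVar I t' ht']
  show (tval I t < tval I t') ↔ _
  constructor
  · intro h; exact_mod_cast h
  · intro h; exact_mod_cast h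

lemma satI_succ_iff (I : Interp) (t t' : LTerm) (ht : t.varsLT 3) (ht' : t'.varsLT 3) :
    SatI I (.succ t t') ↔ I.val (toSVar t) + 1 = I.val (toSVar t') := by
  rw [← val_toSVar I t ht, ← val_toSVar I t' ht']
  show ((tval I t : ℕ) + 1 = (tval I t' : ℕ)) ↔ _
  constructor
  · intro h; exact_mod_cast h
  · intro h; exact_mod_cast h

lemma sepWeight_indicator_le (u u' : SVar) :
    sepWeight (fun s => if s = ({u, u'} : Finset SVar) then 1 else 0) ≤ 1 := by
  unfold sepWeight
  rw [show (1 : ℝ) = Real.sqrt 1 by simp]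
  apply Real.sqrt_le_sqrt
  have hnat : centreDist (fun s => if s = ({u, u'} : Finset SVar) then 1 else 0) ^ 2 +
      borderDist (fun s => if s = ({u, u'} : Finset SVar) then 1 else 0) ≤ 1 := by
    cases u <;> cases u' <;> decide
  exact_mod_cast hnat

/-- If an atomic formula `R(u,u')` — with `R ∈ {<, =, succ}` and `u, u'` among
`{min, max, x, y, z}` (i.e. an atomic formula in the variables `x, y, z`) — distinguishes a
pair of families `⟨C, D⟩` of interpretations over linear orders, then there exists a separator
for `⟨C, D⟩` of weight at most `1`; in particular every minimal separator for `⟨C, D⟩` has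
weight at most `1`. -/
theorem atomic_minimal_separator_weight_le_one (φ : CFormula)
    (hatom : φ.IsAtomic) (hvars : φ.varsLT 3)
    (C D : Set Interp) (hC : ∀ I ∈ C, SatI I φ) (hD : ∀ J ∈ D, ¬ SatI J φ) :
    (∃ δ : Finset SVar → ℕ, IsSeparator δ C D ∧ sepWeight δ ≤ 1) ∧
      (∀ δ : Finset SVar → ℕ, IsMinimalSeparator δ C D → sepWeight δ ≤ 1) := by
  have main : ∃ δ : Finset SVar → ℕ, IsSeparator δ C D ∧ sepWeight δ ≤ 1 := by
    cases φ with
    | eq t t' =>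
      obtain ⟨ht, ht'⟩ := hvars
      refine ⟨fun s => if s = ({toSVar t, toSVar t'} : Finset SVar) then 1 else 0,
        ?_, sepWeight_indicator_le _ _⟩
      intro I hI J hJ
      have hIe : I.val (toSVar t) = I.val (toSVar t') :=
        (satI_eq_iff I t t' ht ht').mp (hC I hI)
      have hJe : J.val (toSVar t) ≠ J.val (toSVar t') :=
        fun h => hD J hJ ((satI_eq_iff J t t' ht ht').mpr h)
      by_cases huu : toSVar t = toSVar t'
      · exact absurd (huu ▸ rfl) hJe
      · refine ⟨toSVar t, toSVar t', huu, Or.inl fun hc => hJe ?_⟩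
        have h1 : compare (I.val (toSVar t)) (I.val (toSVar t')) = .eq :=
          compare_eq_iff_eq.mpr hIe
        rw [hc] at h1
        exact compare_eq_iff_eq.mp h1
    | lt t t' =>
      obtain ⟨ht, ht'⟩ := hvars
      refine ⟨fun s => if s = ({toSVar t, toSVar t'} : Finset SVar) then 1 else 0,
        ?_, sepWeight_indicator_le _ _⟩
      intro I hI J hJ
      have hIl : I.val (toSVar t) < I.val (toSVar t') :=
        (satI_lt_iff I t t' ht ht').mp (hC I hI)
      have hJl : ¬ J.val (toSVar t) < J.val (toSVar t') :=
        fun h => hD J hJ ((satI_lt_iff J t t' ht ht').mpr h)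
      have huu : toSVar t ≠ toSVar t' := fun h => by
        rw [h] at hIl; exact lt_irrefl _ hIl
      refine ⟨toSVar t, toSVar t', huu, Or.inl fun hc => hJl ?_⟩
      have h1 : compare (I.val (toSVar t)) (I.val (toSVar t')) = .lt :=
        compare_lt_iff_lt.mpr hIl
      rw [hc] at h1
      exact compare_lt_iff_lt.mp h1
    | succ t t' =>
      obtain ⟨ht, ht'⟩ := hvars
      refine ⟨fun s => if s = ({toSVar t, toSVar t'} : Finset SVar) then 1 else 0,
        ?_, sepWeight_indicator_le _ _⟩
      intro I hI J hJ
      have hIs : I.val (toSVar t) + 1 = I.val (toSVar t') :=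
        (satI_succ_iff I t t' ht ht').mp (hC I hI)
      have hJs : ¬ J.val (toSVar t) + 1 = J.val (toSVar t') :=
        fun h => hD J hJ ((satI_succ_iff J t t' ht ht').mpr h)
      have huu : toSVar t ≠ toSVar t' := fun h => by
        rw [h] at hIs; omega
      refine ⟨toSVar t, toSVar t', huu, ?_⟩
      by_cases hcmp : compare (I.val (toSVar t)) (I.val (toSVar t'))
          = compare (J.val (toSVar t)) (J.val (toSVar t'))
      · right
        have hIlt : I.val (toSVar t) < I.val (toSVar t') := by omega
        have hJlt : J.val (toSVar t) < J.val (toSVar t') := by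
          have h1 : compare (I.val (toSVar t)) (I.val (toSVar t')) = .lt :=
            compare_lt_iff_lt.mpr hIlt
          rw [hcmp] at h1
          exact compare_lt_iff_lt.mp h1
        have hdI : I.dist (toSVar t) (toSVar t') = 1 := by
          unfold Interp.dist; omega
        have hdJ : J.dist (toSVar t) (toSVar t') ≠ 1 := by
          unfold Interp.dist; omega
        constructor
        · have hδ : (fun s => if s = ({toSVar t, toSVar t'} : Finset SVar) then 1 else 0)
              ({toSVar t, toSVar t'} : Finset SVar) = 1 := if_pos rfl
          rw [hδ, hdI]
          exact min_le_left _ _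
        · rw [hdI]; exact fun h => hdJ h.symm
      · exact Or.inl hcmp
    | not ψ => exact hatom.elim
    | or ψ θ => exact hatom.elim
    | and ψ θ => exact hatom.elim
    | exCnt k j ψ => exact hatom.elim
    | allCnt k j ψ => exact hatom.elim
  obtain ⟨δ, hsep, hw⟩ := main
  exact ⟨⟨δ, hsep, hw⟩, fun δ' hm => le_trans (hm.2 δ hsep) hw⟩
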